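/- arXiv:2209.00975 — 2 statements merged into one kernel-verified Lean document; each statement's English description precedes it below -/
import Mathlib

section
/- Let ⊑_A, ⊑_{A'}, ⊑_B, ⊑_{B'} be partial preorders on types A, A', B, B'. Let (upA, downA) be an embedding–projection pair from (A, ⊑_A) to (A', ⊑_{A'}) and (upB, downB) an embedding–projection pair from (B, ⊑_B) to (B', ⊑_{B'}). Define F : (A → B) → (A' → B') by F f := upB ∘ f ∘ downA and G : (A' → B') → (A → B) by G g := downB ∘ g ∘ upA. Then (F, G) is an embedding–projection pair from (A → B, ⊑_{A→B}) to (A' → B', ⊑_{A'→B'}), where the function spaces carry the function-space relations induced by the given partial preorders. -/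
/-- A relation is quasi-reflexive if any two related elements are each self-related. -/
def QuasiRefl {X : Type*} (r : X → X → Prop) : Prop :=
  ∀ x y, r x y → r x x ∧ r y y

/-- A partial preorder is a transitive and quasi-reflexive relation. -/
def IsPartialPreorder {X : Type*} (r : X → X → Prop) : Prop :=
  Transitive r ∧ QuasiRefl r

/-- An element is self-precise if it is related to itself. -/
def SelfPrecise {X : Type*} (r : X → X → Prop) (x : X) : Prop := r x x

/-- Two elements are equiprecise if they are related both ways. -/
def Equiprecise {X : Type*} (r : X → X → Prop) (x y : X) : Prop := r x y ∧ r y x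

/-- Embedding-projection pair between two relations. -/
structure IsEPPair {A B : Type*} (rA : A → A → Prop) (rB : B → B → Prop)
    (up : A → B) (down : B → A) : Prop where
  up_mono : ∀ a a', rA a a' → rB (up a) (up a')
  down_mono : ∀ b b', rB b b' → rA (down b) (down b')
  adjunction : ∀ a b, SelfPrecise rA a → SelfPrecise rB b →
    (rB (up a) b ↔ rA a (down b))
  retraction : ∀ a, SelfPrecise rA a → rA (down (up a)) a

/-- Function-space relation induced by relations on domain and codomain. -/
def FunRel {A B : Type*} (rA : A → A → Prop) (rB : B → B → Prop)
    (f g : A → B) : Prop :=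
  (∀ a₀ a₁, rA a₀ a₁ → rB (f a₀) (f a₁)) ∧
  (∀ a₀ a₁, rA a₀ a₁ → rB (g a₀) (g a₁)) ∧
  (∀ a₀ a₁, rA a₀ a₁ → rB (f a₀) (g a₁))

/-!
Pre- and post-composition with monotone maps preserves the function-space relation, which gives
monotonicity of `f ↦ upB ∘ f ∘ downA` and `g ↦ downB ∘ g ∘ upA`. The adjunction and the
retraction are checked pointwise: the inequalities `a₀ ⊑ downA (upA a₁)`, `downA (upA a₀) ⊑ a₁`
and `upA (downA a) ⊑ a` of the domain pair move the argument of `f` or `g` into place, after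
which the adjunction or retraction of the codomain pair applies.
-/

open Relator

section FunRel

variable {A A' B B' : Type*} {rA : A → A → Prop} {rA' : A' → A' → Prop}
  {rB : B → B → Prop} {rB' : B' → B' → Prop}

theorem selfPrecise_funRel_iff {f : A → B} :
    SelfPrecise (FunRel rA rB) f ↔ (rA ⇒ rB) f f :=
  ⟨fun h => h.1, fun h => ⟨h, h, h⟩⟩

theorem Relator.LiftFun.conj {u : A' → A} {v : B → B'} {f g : A → B}
    (hu : (rA' ⇒ rA) u u) (h : (rA ⇒ rB) f g) (hv : (rB ⇒ rB') v v) :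
    (rA' ⇒ rB') (v ∘ f ∘ u) (v ∘ g ∘ u) :=
  fun _ _ ha => hv (h (hu ha))

theorem FunRel.conj {u : A' → A} {v : B → B'} {f g : A → B}
    (h : FunRel rA rB f g) (hu : (rA' ⇒ rA) u u) (hv : (rB ⇒ rB') v v) :
    FunRel rA' rB' (v ∘ f ∘ u) (v ∘ g ∘ u) :=
  ⟨LiftFun.conj hu h.1 hv, LiftFun.conj hu h.2.1 hv, LiftFun.conj hu h.2.2 hv⟩

end FunRel

namespace IsEPPair

variable {A B : Type*} {rA : A → A → Prop} {rB : B → B → Prop}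
  {up : A → B} {down : B → A}

theorem up_down_le (hep : IsEPPair rA rB up down) {b : B} (hb : SelfPrecise rB b) :
    rB (up (down b)) b :=
  have hdb : SelfPrecise rA (down b) := hep.down_mono _ _ hb
  (hep.adjunction _ _ hdb hb).mpr hdb

theorem le_down_up (hep : IsEPPair rA rB up down) (hq : QuasiRefl rA) {a₀ a₁ : A}
    (h : rA a₀ a₁) : rA a₀ (down (up a₁)) :=
  (hep.adjunction _ _ (hq _ _ h).1 (hep.up_mono _ _ (hq _ _ h).2)).mp (hep.up_mono _ _ h)

theorem down_up_le (hep : IsEPPair rA rB up down) (ht : Transitive rA) (hq : QuasiRefl rA)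
    {a₀ a₁ : A} (h : rA a₀ a₁) : rA (down (up a₀)) a₁ :=
  ht (hep.retraction _ (hq _ _ h).1) h

end IsEPPair

section Conj

variable {A A' B B' : Type*} {rA : A → A → Prop} {rA' : A' → A' → Prop}
  {rB : B → B → Prop} {rB' : B' → B' → Prop}
  {upA : A → A'} {downA : A' → A} {upB : B → B'} {downB : B' → B}
  {f : A → B} {g : A' → B'}

theorem liftFun_conj_down_of_liftFun_conj_up (hepA : IsEPPair rA rA' upA downA)
    (hepB : IsEPPair rB rB' upB downB) (hqA : QuasiRefl rA) (htB : Transitive rB)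
    (hf : (rA ⇒ rB) f f) (hg : (rA' ⇒ rB') g g) (h : (rA' ⇒ rB') (upB ∘ f ∘ downA) g) :
    (rA ⇒ rB) f (downB ∘ g ∘ upA) := by
  intro a₀ a₁ ha
  have hup : SelfPrecise rA' (upA a₁) := hepA.up_mono _ _ (hqA _ _ ha).2
  have hfs : SelfPrecise rB (f (downA (upA a₁))) := hf (hepA.down_mono _ _ hup)
  exact htB (hf (hepA.le_down_up hqA ha)) ((hepB.adjunction _ _ hfs (hg hup)).mp (h hup))

theorem liftFun_conj_up_of_liftFun_conj_down (hepA : IsEPPair rA rA' upA downA)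
    (hepB : IsEPPair rB rB' upB downB) (hqA : QuasiRefl rA) (hqA' : QuasiRefl rA')
    (htB' : Transitive rB') (hf : (rA ⇒ rB) f f) (hg : (rA' ⇒ rB') g g)
    (h : (rA ⇒ rB) f (downB ∘ g ∘ upA)) :
    (rA' ⇒ rB') (upB ∘ f ∘ downA) g := by
  intro a₀ a₁ ha
  have hd : rA (downA a₀) (downA a₁) := hepA.down_mono _ _ ha
  have hfs : SelfPrecise rB (f (downA a₀)) := hf (hqA _ _ hd).1
  have hgs : SelfPrecise rB' (g (upA (downA a₁))) := hg (hepA.up_mono _ _ (hqA _ _ hd).2)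
  exact htB' ((hepB.adjunction _ _ hfs hgs).mpr (h hd)) (hg (hepA.up_down_le (hqA' _ _ ha).2))

theorem liftFun_conj_down_conj_up (hepA : IsEPPair rA rA' upA downA)
    (hepB : IsEPPair rB rB' upB downB) (htA : Transitive rA) (hqA : QuasiRefl rA)
    (htB : Transitive rB) (hf : (rA ⇒ rB) f f) :
    (rA ⇒ rB) (downB ∘ (upB ∘ f ∘ downA) ∘ upA) f := by
  intro a₀ a₁ ha
  have hfs : SelfPrecise rB (f (downA (upA a₀))) :=
    hf (hepA.down_mono _ _ (hepA.up_mono _ _ (hqA _ _ ha).1))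
  exact htB (hepB.retraction _ hfs) (hf (hepA.down_up_le htA hqA ha))

end Conj

/-- ep-pairs lift to function spaces. -/
theorem stmt7 {A A' B B' : Type*}
    (rA : A → A → Prop) (rA' : A' → A' → Prop)
    (rB : B → B → Prop) (rB' : B' → B' → Prop)
    (hA : IsPartialPreorder rA) (hA' : IsPartialPreorder rA')
    (hB : IsPartialPreorder rB) (hB' : IsPartialPreorder rB')
    (upA : A → A') (downA : A' → A) (upB : B → B') (downB : B' → B)
    (hepA : IsEPPair rA rA' upA downA) (hepB : IsEPPair rB rB' upB downB) :
    IsEPPair (FunRel rA rB) (FunRel rA' rB')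
      (fun f => upB ∘ f ∘ downA) (fun g => downB ∘ g ∘ upA) := by
  obtain ⟨htA, hqA⟩ := hA
  obtain ⟨-, hqA'⟩ := hA'
  obtain ⟨htB, -⟩ := hB
  obtain ⟨htB', -⟩ := hB'
  refine ⟨fun _ _ h => h.conj hepA.down_mono hepB.up_mono,
    fun _ _ h => h.conj hepA.up_mono hepB.down_mono, fun f g hf hg => ?_, fun f hf => ?_⟩
  · rw [selfPrecise_funRel_iff] at hf hg
    constructor
    · rintro ⟨-, -, h⟩
      exact ⟨hf, LiftFun.conj hepA.up_mono hg hepB.down_mono,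
        liftFun_conj_down_of_liftFun_conj_up hepA hepB hqA htB hf hg h⟩
    · rintro ⟨-, -, h⟩
      exact ⟨LiftFun.conj hepA.down_mono hf hepB.up_mono, hg,
        liftFun_conj_up_of_liftFun_conj_down hepA hepB hqA hqA' htB' hf hg h⟩
  · rw [selfPrecise_funRel_iff] at hf
    exact ⟨LiftFun.conj hepA.up_mono (LiftFun.conj hepA.down_mono hf hepB.up_mono)
      hepB.down_mono, hf, liftFun_conj_down_conj_up hepA hepB htA hqA htB hf⟩
end

section
/- Let ⊑_A and ⊑_B be partial preorders on types A and B, and let (up, down) be an embedding–projection pair from (A, ⊑_A) to (B, ⊑_B). Then (List.map up, List.map down) is an embedding–projection pair from (List A, List.Forall₂ ⊑_A) to (List B, List.Forall₂ ⊑_B). -/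
theorem List.forall₂_congr_of_mem {α β : Type*} {R S : α → β → Prop} :
    ∀ {l : List α} {u : List β}, (∀ a ∈ l, ∀ b ∈ u, (R a b ↔ S a b)) →
      (Forall₂ R l u ↔ Forall₂ S l u)
  | [], _, _ => by simp
  | _ :: _, [], _ => by simp
  | a :: l, b :: u, h => by
    rw [forall₂_cons, forall₂_cons, h a mem_cons_self b mem_cons_self,
      forall₂_congr_of_mem fun a' ha' b' hb' =>
        h a' (mem_cons_of_mem a ha') b' (mem_cons_of_mem b hb')]

theorem selfPrecise_forall₂_iff {X : Type*} {r : X → X → Prop} {l : List X} :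
    SelfPrecise (List.Forall₂ r) l ↔ ∀ x ∈ l, SelfPrecise r x :=
  List.forall₂_same

theorem stmt10_general {A B : Type*} (rA : A → A → Prop) (rB : B → B → Prop)
    (up : A → B) (down : B → A) (hep : IsEPPair rA rB up down) :
    IsEPPair (List.Forall₂ rA) (List.Forall₂ rB)
      (List.map up) (List.map down) := by
  refine ⟨fun _ _ h => List.rel_map hep.up_mono h, fun _ _ h => List.rel_map hep.down_mono h,
    fun l m hl hm => ?adjunction, fun l hl => ?retraction⟩
  case adjunction =>
    rw [selfPrecise_forall₂_iff] at hl hm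
    rw [List.forall₂_map_left_iff, List.forall₂_map_right_iff]
    exact List.forall₂_congr_of_mem fun a ha b hb => hep.adjunction a b (hl a ha) (hm b hb)
  case retraction =>
    rw [selfPrecise_forall₂_iff] at hl
    rw [List.map_map, List.forall₂_map_left_iff, List.forall₂_same]
    exact fun a ha => hep.retraction a (hl a ha)

/-- ep-pairs lift to lists via `List.map`. -/
theorem stmt10 {A B : Type*} (rA : A → A → Prop) (rB : B → B → Prop)
    (hA : IsPartialPreorder rA) (hB : IsPartialPreorder rB)
    (up : A → B) (down : B → A) (hep : IsEPPair rA rB up down) :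
    IsEPPair (List.Forall₂ rA) (List.Forall₂ rB)
      (List.map up) (List.map down) :=
  stmt10_general rA rB up down hep
end
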